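/- (1) For all x ∈ ℝ², p_1(x) ≥ ‖x‖²/(2L). (2) If 0 ≤ β ≤ 1 and ‖x‖ ≤ √(12(1−β))/s̄, then p_m(x) ≥ β ‖x‖²/(2L) for every m ≥ 1. -/
import Mathlib


open Real

noncomputable section

/-- `p_m(x) = (1/L) ∑_{ℓ=1}^L ∑_{j=1}^m (−1)^{j+1} (s_ℓ · x)^{2j}/(2j)!`. -/
def pm (L : ℕ) (s : Fin L → ℤ × ℤ) (m : ℕ) (x y : ℝ) : ℝ :=
  (1 / L) * ∑ ℓ, ∑ j ∈ Finset.Icc 1 m,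
    (-1 : ℝ) ^ (j + 1) * ((s ℓ).1 * x + (s ℓ).2 * y) ^ (2 * j) / (Nat.factorial (2 * j))

def cterm (t : ℝ) (j : ℕ) : ℝ := (-1 : ℝ) ^ (j + 1) * t ^ (2 * j) / (Nat.factorial (2 * j))

lemma cterm_nonneg (t : ℝ) {j : ℕ} (hj : Odd j) : 0 ≤ cterm t j := by
  rw [cterm, Even.neg_one_pow hj.add_one, pow_mul]
  positivity

lemma pair_nonneg (t : ℝ) {j : ℕ} (hj : Odd j)
    (h : t ^ 2 ≤ (2 * (j:ℝ) + 1) * (2 * (j:ℝ) + 2)) :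
    0 ≤ cterm t j + cterm t (j + 1) := by
  have h1 : ((-1 : ℝ)) ^ (j + 1) = 1 := Even.neg_one_pow hj.add_one
  have h2 : ((-1 : ℝ)) ^ (j + 1 + 1) = -1 := by rw [pow_succ, h1]; ring
  have hfac : (Nat.factorial (2 * (j + 1)) : ℝ)
      = (2 * (j:ℝ) + 2) * ((2 * (j:ℝ) + 1) * (Nat.factorial (2 * j))) := by
    have : 2 * (j + 1) = (2 * j + 1) + 1 := by omega
    rw [this, Nat.factorial_succ, Nat.factorial_succ]
    push_cast; ring
  have hpow : t ^ (2 * (j + 1)) = t ^ (2 * j) * t ^ 2 := by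
    rw [← pow_add]; ring_nf
  have hA : (0:ℝ) ≤ t ^ (2 * j) := by rw [pow_mul]; positivity
  have hF : (0:ℝ) < (Nat.factorial (2 * j) : ℝ) := by
    exact_mod_cast Nat.factorial_pos _
  rw [cterm, cterm, h1, h2, hfac, hpow]
  have hj0 : (0:ℝ) ≤ (j:ℝ) := Nat.cast_nonneg _
  rw [one_mul]
  have key : t ^ (2 * j) * t ^ 2 / ((2 * (j:ℝ) + 2) * ((2 * (j:ℝ) + 1) * (Nat.factorial (2 * j))))
      ≤ t ^ (2 * j) / (Nat.factorial (2 * j)) := by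
    rw [div_le_div_iff₀ (by positivity) hF]
    have h3 : t ^ (2*j) * t ^ 2 ≤ t ^ (2*j) * ((2 * (j:ℝ) + 1) * (2 * (j:ℝ) + 2)) :=
      mul_le_mul_of_nonneg_left h hA
    nlinarith [mul_le_mul_of_nonneg_right h3 hF.le]
  rw [neg_mul, neg_div, one_mul]
  linarith [key]

def cS (t : ℝ) (m : ℕ) : ℝ := ∑ j ∈ Finset.Icc 1 m, cterm t j

lemma cS_succ (t : ℝ) (m : ℕ) : cS t (m + 1) = cS t m + cterm t (m + 1) :=
  Finset.sum_Icc_succ_top (by omega) _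

lemma cS_one (t : ℝ) : cS t 1 = t ^ 2 / 2 := by
  rw [cS]
  simp [cterm, Finset.Icc_self, Nat.factorial]

lemma cS_two (t : ℝ) : cS t 2 = t ^ 2 / 2 - t ^ 4 / 24 := by
  have : cS t 2 = cS t 1 + cterm t 2 := cS_succ t 1
  rw [this, cS_one, cterm]
  norm_num [Nat.factorial]
  ring

lemma cS_lower (t : ℝ) (ht : t ^ 2 ≤ 56) :
    ∀ m : ℕ, 1 ≤ m → t ^ 2 / 2 - t ^ 4 / 24 ≤ cS t m := by
  intro m
  induction m using Nat.strong_induction_on with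
  | _ m ih =>
    intro hm
    rcases Nat.lt_or_ge m 3 with h | h
    · interval_cases m
      · rw [cS_one]; nlinarith [sq_nonneg (t ^ 2)]
      · rw [cS_two]
    · obtain ⟨k, rfl⟩ : ∃ k, m = k + 3 := ⟨m - 3, by omega⟩
      rcases Nat.even_or_odd (k + 3) with he | ho
      · -- even: use ih at k+1 and pair (k+2, k+3)
        have hkodd : Odd (k + 2) := by
          rcases he with ⟨r, hr⟩
          exact ⟨r - 1, by omega⟩
        have hk1 : (1:ℝ) ≤ (k:ℝ) := by
          have : 1 ≤ k := by
            rcases hkodd with ⟨r, hr⟩; omega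
          exact_mod_cast this
        have hpair : 0 ≤ cterm t (k + 2) + cterm t (k + 3) := by
          have := pair_nonneg t hkodd (by push_cast; nlinarith)
          convert this using 3 <;> omega
        have h1 : cS t (k + 3) = cS t (k + 1) + cterm t (k + 2) + cterm t (k + 3) := by
          rw [show k + 3 = (k + 2) + 1 from rfl, cS_succ, show k + 2 = (k + 1) + 1 from rfl,
            cS_succ]
        rw [h1]
        have := ih (k + 1) (by omega) (by omega)
        linarith
      · have h1 : cS t (k + 3) = cS t (k + 2) + cterm t (k + 3) := cS_succ t (k + 2)
        rw [h1]
        have := ih (k + 2) (by omega) (by omega)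
        have := cterm_nonneg t ho
        linarith

lemma cauchy2 (a b x y : ℝ) : (a * x + b * y) ^ 2 ≤ (a ^ 2 + b ^ 2) * (x ^ 2 + y ^ 2) := by
  nlinarith [sq_nonneg (a * y - b * x)]

/-- (1) `p_1(x) ≥ ‖x‖²/(2L)` for all `x`; (2) if `0 ≤ β ≤ 1` and
`‖x‖ ≤ √(12(1−β))/s̄`, then `p_m(x) ≥ β‖x‖²/(2L)` for every `m ≥ 1`. -/
theorem pm_lower_bounds (L : ℕ) (hL : 2 ≤ L) (s : Fin L → ℤ × ℤ)
    (hs : ∀ ℓ, s ℓ ≠ 0)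
    (h1 : s ⟨0, by omega⟩ = (1, 0)) (h2 : s ⟨1, by omega⟩ = (0, 1))
    (sbar : ℝ)
    (hsbar : IsGreatest (Set.range fun ℓ =>
      Real.sqrt (((s ℓ).1 : ℝ) ^ 2 + ((s ℓ).2 : ℝ) ^ 2)) sbar) :
    (∀ x y : ℝ, (x ^ 2 + y ^ 2) / (2 * L) ≤ pm L s 1 x y) ∧
    (∀ β : ℝ, 0 ≤ β → β ≤ 1 → ∀ x y : ℝ,
      Real.sqrt (x ^ 2 + y ^ 2) ≤ Real.sqrt (12 * (1 - β)) / sbar →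
      ∀ m : ℕ, 1 ≤ m → β * (x ^ 2 + y ^ 2) / (2 * L) ≤ pm L s m x y) := by
  have hLpos : (0:ℝ) < L := by positivity
  set i0 : Fin L := ⟨0, by omega⟩ with hi0
  set i1 : Fin L := ⟨1, by omega⟩ with hi1
  have hne : i0 ≠ i1 := by simp [hi0, hi1, Fin.ext_iff]
  have hpm : ∀ m x y, pm L s m x y
      = (1 / L) * ∑ ℓ, cS (((s ℓ).1 : ℝ) * x + ((s ℓ).2 : ℝ) * y) m := fun m x y => rfl
  have ht0 : ∀ x y : ℝ, ((s i0).1 : ℝ) * x + ((s i0).2 : ℝ) * y = x := by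
    intro x y; rw [h1]; push_cast; ring
  have ht1 : ∀ x y : ℝ, ((s i1).1 : ℝ) * x + ((s i1).2 : ℝ) * y = y := by
    intro x y; rw [h2]; push_cast; ring
  have hsum_pair : ∀ (f : Fin L → ℝ), (∀ ℓ, 0 ≤ f ℓ) →
      f i0 + f i1 ≤ ∑ ℓ, f ℓ := by
    intro f hf
    have hsub : ({i0, i1} : Finset (Fin L)) ⊆ Finset.univ := Finset.subset_univ _
    have := Finset.sum_le_sum_of_subset_of_nonneg hsub (fun i _ _ => hf i)
    rwa [Finset.sum_pair hne] at this
  constructor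
  · intro x y
    rw [hpm]
    have hsum : (x ^ 2 + y ^ 2) / 2
        ≤ ∑ ℓ, cS (((s ℓ).1 : ℝ) * x + ((s ℓ).2 : ℝ) * y) 1 := by
      simp_rw [cS_one]
      have := hsum_pair (fun ℓ => ((((s ℓ).1 : ℝ) * x + ((s ℓ).2 : ℝ) * y)) ^ 2 / 2)
        (fun ℓ => by positivity)
      simp only [ht0, ht1] at this
      linarith
    calc (x ^ 2 + y ^ 2) / (2 * L) = (1 / L) * ((x ^ 2 + y ^ 2) / 2) := by
          ring
      _ ≤ _ := by
          apply mul_le_mul_of_nonneg_left hsum (by positivity)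
  · intro β hβ0 hβ1 x y hx m hm
    rw [hpm]
    have hsbar1 : 1 ≤ sbar := by
      have := hsbar.2 ⟨i0, rfl⟩
      simp only at this
      rwa [h1, show (((1:ℤ):ℝ) ^ 2 + ((0:ℤ):ℝ) ^ 2) = 1 by norm_num, Real.sqrt_one] at this
    have hsbar0 : 0 < sbar := by linarith
    have hxy0 : 0 ≤ x ^ 2 + y ^ 2 := by positivity
    have hx2 : sbar ^ 2 * (x ^ 2 + y ^ 2) ≤ 12 * (1 - β) := by
      have h12 : (0:ℝ) ≤ 12 * (1 - β) := by nlinarith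
      have hmul : Real.sqrt (x ^ 2 + y ^ 2) * sbar ≤ Real.sqrt (12 * (1 - β)) :=
        (le_div_iff₀ hsbar0).mp hx
      have hsq := mul_self_le_mul_self (by positivity) hmul
      rw [mul_mul_mul_comm, Real.mul_self_sqrt hxy0, Real.mul_self_sqrt h12] at hsq
      nlinarith [hsq]
    have hterm : ∀ ℓ, β * ((((s ℓ).1 : ℝ) * x + ((s ℓ).2 : ℝ) * y) ^ 2) / 2
        ≤ cS (((s ℓ).1 : ℝ) * x + ((s ℓ).2 : ℝ) * y) m := by
      intro ℓ
      set t : ℝ := ((s ℓ).1 : ℝ) * x + ((s ℓ).2 : ℝ) * y with hts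
      clear_value t
      have hab : ((s ℓ).1 : ℝ) ^ 2 + ((s ℓ).2 : ℝ) ^ 2 ≤ sbar ^ 2 := by
        have hle := hsbar.2 ⟨ℓ, rfl⟩
        have := Real.sq_sqrt (show (0:ℝ) ≤ ((s ℓ).1 : ℝ) ^ 2 + ((s ℓ).2 : ℝ) ^ 2 by positivity)
        nlinarith [Real.sqrt_nonneg (((s ℓ).1 : ℝ) ^ 2 + ((s ℓ).2 : ℝ) ^ 2)]
      have ht12 : t ^ 2 ≤ 12 * (1 - β) := by
        have hcs := cauchy2 ((s ℓ).1 : ℝ) ((s ℓ).2 : ℝ) x y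
        rw [← hts] at hcs
        nlinarith [mul_le_mul_of_nonneg_right hab hxy0]
      have ht56 : t ^ 2 ≤ 56 := by nlinarith
      have hlow := cS_lower t ht56 m hm
      nlinarith [hlow, mul_nonneg (sq_nonneg t) (by linarith : (0:ℝ) ≤ 12 * (1 - β) - t ^ 2)]
    have hsum : β * (x ^ 2 + y ^ 2) / 2
        ≤ ∑ ℓ, cS (((s ℓ).1 : ℝ) * x + ((s ℓ).2 : ℝ) * y) m := by
      have h1le := hsum_pair (fun ℓ => β * ((((s ℓ).1 : ℝ) * x + ((s ℓ).2 : ℝ) * y) ^ 2) / 2)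
        (fun ℓ => by positivity)
      have h2le := Finset.sum_le_sum (fun ℓ (_ : ℓ ∈ Finset.univ) => hterm ℓ)
      simp only [ht0, ht1] at h1le
      calc β * (x ^ 2 + y ^ 2) / 2
          = β * x ^ 2 / 2 + β * y ^ 2 / 2 := by ring
        _ ≤ _ := by linarith
    calc β * (x ^ 2 + y ^ 2) / (2 * L) = (1 / L) * (β * (x ^ 2 + y ^ 2) / 2) := by
          ring
      _ ≤ _ := mul_le_mul_of_nonneg_left hsum (by positivity)

end
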